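/- arXiv:2412.02683 — 2 statements merged into one kernel-verified Lean document; each statement's English description precedes it below -/
import Mathlib

section
/- Suppose k is an odd positive integer and nonnegative integers a₁,…,a₁₂ satisfy: a₁+a₂=4k, 2a₄−a₅+a₉−a₁₂=k, 2a₃−a₅+a₉−a₁₁=k, a₃+a₄+a₉+a₁₀=5k, a₅+a₆+a₇+a₈=5k, 2a₆+2a₉+a₁₁+a₁₂=8k, 2a₅+2a₁₀+a₁₁+a₁₂=8k. Then a₁₁ ≠ 8k and a₁₂ ≠ 8k; consequently a₁₁, a₁₂ ≤ 8k−1. -/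
/-- Parity obstruction for odd `k`: the system forces `a₁₁ ≠ 8k` and `a₁₂ ≠ 8k`,
hence `a₁₁, a₁₂ ≤ 8k − 1`. -/
theorem coeff_bound_odd
    (k a1 a2 a3 a4 a5 a6 a7 a8 a9 a10 a11 a12 : ℕ) (hk : 0 < k) (hodd : Odd k)
    (h1 : a1 + a2 = 4 * k)
    (h2 : 2 * (a4 : ℤ) - a5 + a9 - a12 = k)
    (h3 : 2 * (a3 : ℤ) - a5 + a9 - a11 = k)
    (h4 : a3 + a4 + a9 + a10 = 5 * k)
    (h5 : a5 + a6 + a7 + a8 = 5 * k)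
    (h6 : 2 * a6 + 2 * a9 + a11 + a12 = 8 * k)
    (h7 : 2 * a5 + 2 * a10 + a11 + a12 = 8 * k) :
    a11 ≠ 8 * k ∧ a12 ≠ 8 * k ∧ a11 ≤ 8 * k - 1 ∧ a12 ≤ 8 * k - 1 := by
  obtain ⟨m, hm⟩ := hodd
  subst hm
  omega
end

section
/- Suppose nonnegative real numbers a₁,…,a₁₂ and a positive real k satisfy: a₁+a₂=4k, 2a₄−a₅+a₉−a₁₂=k, 2a₃−a₅+a₉−a₁₁=k, a₃+a₄+a₉+a₁₀=5k, a₅+a₆+a₇+a₈=5k, 2a₆+2a₉+a₁₁+a₁₂=8k, 2a₅+2a₁₀+a₁₁+a₁₂=8k. Then max(a₁,…,a₁₂) ≤ 8k, and this bound is attained: there is a solution with a₁₁ = 8k. -/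
/-- The real-relaxation linear program: for every real `k > 0`, every nonnegative
real solution of the system has all coordinates at most `8k`, and the bound is
attained by a solution with `a₁₁ = 8k`. -/
theorem real_LP_bound (k : ℝ) (hk : 0 < k) :
    (∀ a1 a2 a3 a4 a5 a6 a7 a8 a9 a10 a11 a12 : ℝ,
      0 ≤ a1 → 0 ≤ a2 → 0 ≤ a3 → 0 ≤ a4 → 0 ≤ a5 → 0 ≤ a6 →
      0 ≤ a7 → 0 ≤ a8 → 0 ≤ a9 → 0 ≤ a10 → 0 ≤ a11 → 0 ≤ a12 →
      a1 + a2 = 4 * k →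
      2 * a4 - a5 + a9 - a12 = k →
      2 * a3 - a5 + a9 - a11 = k →
      a3 + a4 + a9 + a10 = 5 * k →
      a5 + a6 + a7 + a8 = 5 * k →
      2 * a6 + 2 * a9 + a11 + a12 = 8 * k →
      2 * a5 + 2 * a10 + a11 + a12 = 8 * k →
      max a1 (max a2 (max a3 (max a4 (max a5 (max a6 (max a7 (max a8
        (max a9 (max a10 (max a11 a12)))))))))) ≤ 8 * k) ∧
    (∃ b1 b2 b3 b4 b5 b6 b7 b8 b9 b10 b11 b12 : ℝ,
      0 ≤ b1 ∧ 0 ≤ b2 ∧ 0 ≤ b3 ∧ 0 ≤ b4 ∧ 0 ≤ b5 ∧ 0 ≤ b6 ∧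
      0 ≤ b7 ∧ 0 ≤ b8 ∧ 0 ≤ b9 ∧ 0 ≤ b10 ∧ 0 ≤ b11 ∧ 0 ≤ b12 ∧
      b1 + b2 = 4 * k ∧
      2 * b4 - b5 + b9 - b12 = k ∧
      2 * b3 - b5 + b9 - b11 = k ∧
      b3 + b4 + b9 + b10 = 5 * k ∧
      b5 + b6 + b7 + b8 = 5 * k ∧
      2 * b6 + 2 * b9 + b11 + b12 = 8 * k ∧
      2 * b5 + 2 * b10 + b11 + b12 = 8 * k ∧
      b11 = 8 * k) := by
  constructor
  · intro a1 a2 a3 a4 a5 a6 a7 a8 a9 a10 a11 a12 h1 h2 h3 h4 h5 h6 h7 h8 h9 h10 h11 h12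
      e1 e2 e3 e4 e5 e6 e7
    simp only [max_le_iff]
    refine ⟨by linarith, by linarith, by linarith, by linarith, by linarith, by linarith,
      by linarith, by linarith, by linarith, by linarith, by linarith, by linarith⟩
  · exact ⟨2*k, 2*k, 9*k/2, k/2, 0, 0, 9*k/2, k/2, 0, 0, 8*k, 0,
      by linarith, by linarith, by linarith, by linarith, by norm_num, by norm_num,
      by linarith, by linarith, by norm_num, by norm_num, by linarith, by norm_num,
      by ring, by ring, by ring, by ring, by ring, by ring, by ring, by ring⟩
end
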